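/- (Pointwise comparison of truncations) Let m≥1, φ(X)=|X|^{m-1}X, and M>0. Let a,b∈ℝ with |a|≤2M and |b|≤2M. Set either ã=max{a,M/4}, b̃=max{b,M/4} with a level k∈[M/2,2M], or ã=min{a,−M/4}, b̃=min{b,−M/4} with a level k∈[−2M,−M/2]. Then for both the positive and the negative truncations one has M^{m−1}·|(ã−k)_± − (b̃−k)_±|² ≤ 4^m·((φ(a)−φ(k))_± − (φ(b)−φ(k))_±)·((a−k)_± − (b−k)_±). -/

import Mathlib

/-!
Write `c = M / 4`. For `c ≤ y` and `x ≤ y` one has `c ^ (m - 1) (y - x) ≤ 2 (φ y - φ x)`: for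
`x ≥ 0` this follows from `φ y - φ x ≥ y ^ (m - 1) (y - x)`, and for `x < 0` one uses
`φ x = -φ (-x)` and either `-x ≥ c` or `-x < c ≤ y`. As `M ^ (m - 1) = 4 ^ (m - 1) c ^ (m - 1)`,
this gives `M ^ (m - 1) (max x c - max y c) ^ 2 ≤ 4 ^ m (φ x - φ y)(x - y)` for all `x, y`.
Writing `(x - k)₊ = max x k - k` and `(k - x)₊ = k - min x k`, every truncation in the theorem
takes this shape because `c ≤ k` and `φ` is monotone; the negative case is the positive one
applied to `-a, -b, -k`, as `φ` is odd.
-/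

open Set

noncomputable section

/-- The nonlinearity φ(X) = |X|^{m-1} X. -/
def phi (m X : ℝ) : ℝ := |X| ^ (m - 1) * X

/-- Positive part. -/
def posP (a : ℝ) : ℝ := max a 0

lemma phi_neg (m x : ℝ) : phi m (-x) = -phi m x := by
  simp [phi, abs_neg]

lemma phi_of_nonneg (m : ℝ) {x : ℝ} (hx : 0 ≤ x) : phi m x = x ^ (m - 1) * x := by
  rw [phi, abs_of_nonneg hx]

lemma phi_nonneg (m : ℝ) {x : ℝ} (hx : 0 ≤ x) : 0 ≤ phi m x := by
  rw [phi_of_nonneg m hx]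
  exact mul_nonneg (Real.rpow_nonneg hx _) hx

lemma rpow_sub_one_mul_le_phi {m c y : ℝ} (hm : 1 ≤ m) (hc : 0 ≤ c) (hcy : c ≤ y) :
    c ^ (m - 1) * y ≤ phi m y := by
  rw [phi_of_nonneg m (hc.trans hcy)]
  exact mul_le_mul_of_nonneg_right (Real.rpow_le_rpow hc hcy (by linarith)) (hc.trans hcy)

lemma rpow_sub_one_mul_sub_le_phi_sub {m x y : ℝ} (hm : 1 ≤ m) (hx : 0 ≤ x) (hxy : x ≤ y) :
    y ^ (m - 1) * (y - x) ≤ phi m y - phi m x := by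
  rw [phi_of_nonneg m hx, phi_of_nonneg m (hx.trans hxy)]
  have : x ^ (m - 1) * x ≤ y ^ (m - 1) * x :=
    mul_le_mul_of_nonneg_right (Real.rpow_le_rpow hx hxy (by linarith)) hx
  linarith

lemma phi_monotone {m : ℝ} (hm : 1 ≤ m) : Monotone (phi m) := by
  have of_nonneg : ∀ {x y : ℝ}, 0 ≤ x → x ≤ y → phi m x ≤ phi m y := fun hx hxy => by
    have := rpow_sub_one_mul_sub_le_phi_sub hm hx hxy
    nlinarith [Real.rpow_nonneg (hx.trans hxy) (m - 1)]
  intro x y hxy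
  rcases le_total 0 x with hx | hx
  · exact of_nonneg hx hxy
  rcases le_total 0 y with hy | hy
  · have hφx : phi m x ≤ 0 := by
      simpa [phi_neg] using phi_nonneg m (neg_nonneg.2 hx)
    exact hφx.trans (phi_nonneg m hy)
  · have := of_nonneg (neg_nonneg.2 hy) (neg_le_neg hxy)
    rwa [phi_neg, phi_neg, neg_le_neg_iff] at this

lemma rpow_sub_one_mul_sub_le_two_mul_phi_sub {m c x y : ℝ} (hm : 1 ≤ m) (hc : 0 ≤ c)
    (hcy : c ≤ y) (hxy : x ≤ y) :
    c ^ (m - 1) * (y - x) ≤ 2 * (phi m y - phi m x) := by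
  have hy := hc.trans hcy
  have hcpow : 0 ≤ c ^ (m - 1) := Real.rpow_nonneg hc _
  rcases le_total 0 x with hx | hx
  · have hslope := rpow_sub_one_mul_sub_le_phi_sub hm hx hxy
    have : c ^ (m - 1) ≤ y ^ (m - 1) := Real.rpow_le_rpow hc hcy (by linarith)
    nlinarith
  · have hφy := rpow_sub_one_mul_le_phi hm hc hcy
    have hφx : c ^ (m - 1) * -x ≤ phi m (-x) + phi m y := by
      rcases le_total c (-x) with hcx | hxc
      · linarith [rpow_sub_one_mul_le_phi hm hc hcx, phi_nonneg m hy]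
      · linarith [phi_nonneg m (neg_nonneg.2 hx),
          mul_le_mul_of_nonneg_left (hxc.trans hcy) hcpow]
    have hφnegx := phi_nonneg m (neg_nonneg.2 hx)
    rw [phi_neg] at hφx hφnegx
    linarith

lemma rpow_sub_one_mul_sub_le_four_rpow_mul_phi_sub {m M x y : ℝ} (hm : 1 ≤ m) (hM : 0 ≤ M)
    (hy : M / 4 ≤ y) (hxy : x ≤ y) :
    M ^ (m - 1) * (y - x) ≤ 4 ^ m * (phi m y - phi m x) := by
  have hsplit : M ^ (m - 1) = 4 ^ (m - 1) * (M / 4) ^ (m - 1) := by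
    rw [← Real.mul_rpow (by norm_num) (by positivity)]
    ring_nf
  have hfour : (4 : ℝ) ^ m = 4 ^ (m - 1) * 4 := by
    rw [← Real.rpow_add_one (by norm_num)]
    ring_nf
  have hslope := rpow_sub_one_mul_sub_le_two_mul_phi_sub hm (by positivity) hy hxy
  have hφ : 0 ≤ phi m y - phi m x := sub_nonneg.2 (phi_monotone hm hxy)
  have h4 : (0 : ℝ) ≤ 4 ^ (m - 1) := Real.rpow_nonneg (by norm_num) _
  rw [hsplit, hfour, mul_assoc, mul_assoc]
  exact mul_le_mul_of_nonneg_left (by linarith) h4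

lemma rpow_sub_one_mul_sq_max_sub_max_le {m M : ℝ} (hm : 1 ≤ m) (hM : 0 ≤ M) (x y : ℝ) :
    M ^ (m - 1) * (max x (M / 4) - max y (M / 4)) ^ 2 ≤
      4 ^ m * ((phi m x - phi m y) * (x - y)) := by
  wlog hyx : y ≤ x generalizing x y
  · have := this y x (le_of_not_ge hyx)
    rwa [← neg_sub (max x _), neg_sq, ← neg_sub (phi m x), ← neg_sub x, neg_mul_neg] at this
  have hφ : 0 ≤ phi m x - phi m y := sub_nonneg.2 (phi_monotone hm hyx)
  have hMpow : 0 ≤ M ^ (m - 1) := Real.rpow_nonneg hM _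
  rcases le_total x (M / 4) with hx | hx
  · rw [max_eq_right hx, max_eq_right (hyx.trans hx), sub_self]
    have : (0 : ℝ) ≤ 4 ^ m := Real.rpow_nonneg (by norm_num) _
    nlinarith [mul_nonneg hφ (sub_nonneg.2 hyx)]
  · have hsq : (max x (M / 4) - max y (M / 4)) ^ 2 ≤ (x - y) ^ 2 :=
      sq_le_sq.2 (abs_max_sub_max_le_abs x y _)
    calc M ^ (m - 1) * (max x (M / 4) - max y (M / 4)) ^ 2
        ≤ M ^ (m - 1) * (x - y) * (x - y) := by nlinarith
      _ ≤ 4 ^ m * (phi m x - phi m y) * (x - y) :=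
          mul_le_mul_of_nonneg_right
            (rpow_sub_one_mul_sub_le_four_rpow_mul_phi_sub hm hM hx hyx) (sub_nonneg.2 hyx)
      _ = 4 ^ m * ((phi m x - phi m y) * (x - y)) := mul_assoc _ _ _

lemma posP_sub_eq_max_sub (x k : ℝ) : posP (x - k) = max x k - k := by
  rw [posP, ← max_sub_sub_right, sub_self]

lemma posP_sub_eq_sub_min (k x : ℝ) : posP (k - x) = k - min x k := by
  rw [posP, ← max_sub_sub_left, sub_self]

lemma upper_truncation_comparison {m M : ℝ} (hm : 1 ≤ m) (hM : 0 ≤ M) {k : ℝ} (hk : M / 4 ≤ k)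
    (a b : ℝ) :
    M ^ (m - 1) * (posP (max a (M / 4) - k) - posP (max b (M / 4) - k)) ^ 2 ≤
      4 ^ m * ((posP (phi m a - phi m k) - posP (phi m b - phi m k)) *
        (posP (a - k) - posP (b - k))) := by
  have htrunc : ∀ x, max (max x (M / 4)) k = max (max x k) (M / 4) := fun x => by
    rw [max_right_comm, max_eq_left (hk.trans (le_max_right x k))]
  simp only [posP_sub_eq_max_sub, htrunc, ← (phi_monotone hm).map_max, sub_sub_sub_cancel_right]
  exact rpow_sub_one_mul_sq_max_sub_max_le hm hM _ _

lemma lower_truncation_comparison {m M : ℝ} (hm : 1 ≤ m) (hM : 0 ≤ M) {k : ℝ} (hk : M / 4 ≤ k)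
    (a b : ℝ) :
    M ^ (m - 1) * (posP (k - max a (M / 4)) - posP (k - max b (M / 4))) ^ 2 ≤
      4 ^ m * ((posP (phi m k - phi m a) - posP (phi m k - phi m b)) *
        (posP (k - a) - posP (k - b))) := by
  have htrunc : ∀ x, min (max x (M / 4)) k = max (min x k) (M / 4) := fun x => by
    rw [min_max_distrib_right, min_eq_left hk]
  simp only [posP_sub_eq_sub_min, htrunc, ← (phi_monotone hm).map_min, sub_sub_sub_cancel_left]
  exact rpow_sub_one_mul_sq_max_sub_max_le hm hM _ _

theorem pointwise_truncation_comparison_general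
    (m : ℝ) (hm : 1 ≤ m) (M : ℝ) (hM : 0 < M)
    (a b k ta tb : ℝ)
    (hcase :
      (ta = max a (M / 4) ∧ tb = max b (M / 4) ∧ k ∈ Icc (M / 2) (2 * M)) ∨
      (ta = min a (-(M / 4)) ∧ tb = min b (-(M / 4)) ∧ k ∈ Icc (-(2 * M)) (-(M / 2)))) :
    M ^ (m - 1) * (posP (ta - k) - posP (tb - k)) ^ 2 ≤
        (4 : ℝ) ^ m * ((posP (phi m a - phi m k) - posP (phi m b - phi m k)) *
          (posP (a - k) - posP (b - k))) ∧
    M ^ (m - 1) * (posP (k - ta) - posP (k - tb)) ^ 2 ≤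
        (4 : ℝ) ^ m * ((posP (phi m k - phi m a) - posP (phi m k - phi m b)) *
          (posP (k - a) - posP (k - b))) := by
  rcases hcase with ⟨rfl, rfl, hk, -⟩ | ⟨rfl, rfl, -, hk⟩
  · have hk : M / 4 ≤ k := by linarith
    exact ⟨upper_truncation_comparison hm hM.le hk a b,
      lower_truncation_comparison hm hM.le hk a b⟩
  · have hk : M / 4 ≤ -k := by linarith
    have hupper := upper_truncation_comparison hm hM.le hk (-a) (-b)
    have hlower := lower_truncation_comparison hm hM.le hk (-a) (-b)
    rw [← neg_neg (M / 4)] at hupper hlower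
    simp only [max_neg_neg, phi_neg, neg_sub_neg] at hupper hlower
    exact ⟨hlower, hupper⟩

/-- Pointwise comparison of truncations, Lemma 4.1: for m ≥ 1, M > 0,
|a|,|b| ≤ 2M, with either ã = max{a, M/4}, b̃ = max{b, M/4} and k ∈ [M/2, 2M], or
ã = min{a, -M/4}, b̃ = min{b, -M/4} and k ∈ [-2M, -M/2], one has, for both truncations,
M^{m-1}|(ã-k)_± - (b̃-k)_±|² ≤ 4^m ((φ(a)-φ(k))_± - (φ(b)-φ(k))_±)((a-k)_± - (b-k)_±). -/
theorem pointwise_truncation_comparison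
    (m : ℝ) (hm : 1 ≤ m) (M : ℝ) (hM : 0 < M)
    (a b k ta tb : ℝ) (ha : |a| ≤ 2 * M) (hb : |b| ≤ 2 * M)
    (hcase :
      (ta = max a (M / 4) ∧ tb = max b (M / 4) ∧ k ∈ Icc (M / 2) (2 * M)) ∨
      (ta = min a (-(M / 4)) ∧ tb = min b (-(M / 4)) ∧ k ∈ Icc (-(2 * M)) (-(M / 2)))) :
    M ^ (m - 1) * (posP (ta - k) - posP (tb - k)) ^ 2 ≤
        (4 : ℝ) ^ m * ((posP (phi m a - phi m k) - posP (phi m b - phi m k)) *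
          (posP (a - k) - posP (b - k))) ∧
    M ^ (m - 1) * (posP (k - ta) - posP (k - tb)) ^ 2 ≤
        (4 : ℝ) ^ m * ((posP (phi m k - phi m a) - posP (phi m k - phi m b)) *
          (posP (k - a) - posP (k - b))) :=
  pointwise_truncation_comparison_general m hm M hM a b k ta tb hcase
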